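/- As k → ∞, the unique positive root α_k of P_k(x) = 2 + x + ... + x^{k-2} - x^k converges to the golden ratio φ = (1+√5)/2. -/

import Mathlib

/-- `P k x = 2 + x + x^2 + ... + x^(k-2) - x^k`. -/
noncomputable def P (k : ℕ) (x : ℝ) : ℝ := 2 + ∑ i ∈ Finset.Icc 1 (k - 2), x ^ i - x ^ k

/-!
Multiplying by `x - 1` telescopes the geometric sum: `(x - 1) P_k(x) = x - 2 - x^(k-1) (x² - x - 1)`,
and `x² - x - 1 = (x - φ)(x + φ - 1)`. A positive root `x` exceeds `1`, so `x ≥ φ` would give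
`x - 2 ≥ x² - x - 1`, i.e. `(x - 1)² ≤ 0`; hence `x < φ`. Then `x^(k-1) (φ - x)(x + φ - 1) = 2 - x < 1`,
and since `x^k = 2 + x + ... + x^(k-2) ≥ k`, this forces `k (φ - x) < 1`.
-/

open Finset Filter Real
open scoped goldenRatio

lemma sq_sub_sub_one_eq_mul (x : ℝ) : x ^ 2 - x - 1 = (x - φ) * (x + φ - 1) := by
  linear_combination goldenRatio_sq

lemma sub_one_mul_P {k : ℕ} (hk : 2 ≤ k) (x : ℝ) :
    (x - 1) * P k x = x - 2 - x ^ (k - 1) * (x ^ 2 - x - 1) := by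
  obtain ⟨m, rfl⟩ := Nat.exists_eq_add_of_le' hk
  have h_range : ∑ i ∈ range (m + 1), x ^ i = 1 + ∑ i ∈ Icc 1 m, x ^ i := by
    rw [range_eq_Ico, sum_eq_sum_Ico_succ_bot m.succ_pos, Nat.succ_eq_add_one, zero_add,
      Ico_add_one_right_eq_Icc, pow_zero]
  have h_geom := geom_sum_mul x (m + 1)
  simp only [P, show m + 2 - 2 = m by omega, show m + 2 - 1 = m + 1 by omega]
  linear_combination h_geom - (x - 1) * h_range

variable {k : ℕ} {x : ℝ}

lemma pow_eq_of_P_eq_zero (h : P k x = 0) : x ^ k = 2 + ∑ i ∈ Icc 1 (k - 2), x ^ i := by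
  unfold P at h
  linarith

lemma one_lt_of_P_eq_zero (hx : 0 ≤ x) (h : P k x = 0) : 1 < x := by
  by_contra! hx1
  have h_sum : 0 ≤ ∑ i ∈ Icc 1 (k - 2), x ^ i := sum_nonneg fun i _ => pow_nonneg hx i
  linarith [pow_eq_of_P_eq_zero h, pow_le_one₀ hx hx1 (n := k)]

lemma natCast_le_pow_of_P_eq_zero (hx : 1 ≤ x) (h : P k x = 0) : (k : ℝ) ≤ x ^ k := by
  have h_sum : ((k - 2 : ℕ) : ℝ) ≤ ∑ i ∈ Icc 1 (k - 2), x ^ i := by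
    simpa using card_nsmul_le_sum (Icc 1 (k - 2)) (x ^ ·) 1 fun i _ => one_le_pow₀ hx
  have h_cast : (k : ℝ) ≤ 2 + ((k - 2 : ℕ) : ℝ) := by norm_cast; omega
  linarith [pow_eq_of_P_eq_zero h]

lemma pow_mul_sq_sub_sub_one_eq_of_P_eq_zero (hk : 2 ≤ k) (h : P k x = 0) :
    x ^ (k - 1) * (x ^ 2 - x - 1) = x - 2 := by
  have h_mul := sub_one_mul_P hk x
  rw [h, mul_zero] at h_mul
  linear_combination h_mul

lemma lt_goldenRatio_of_P_eq_zero (hk : 2 ≤ k) (hx : 0 ≤ x) (h : P k x = 0) : x < φ := by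
  have hx1 := one_lt_of_P_eq_zero hx h
  by_contra! h_ge
  have h_nonneg : 0 ≤ x ^ 2 - x - 1 := by
    rw [sq_sub_sub_one_eq_mul]
    have := one_lt_goldenRatio
    apply mul_nonneg <;> linarith
  have h_le : x ^ 2 - x - 1 ≤ x ^ (k - 1) * (x ^ 2 - x - 1) :=
    le_mul_of_one_le_left h_nonneg (one_le_pow₀ hx1.le)
  rw [pow_mul_sq_sub_sub_one_eq_of_P_eq_zero hk h] at h_le
  nlinarith

lemma goldenRatio_sub_inv_lt_of_P_eq_zero (hk : 2 ≤ k) (hx : 0 ≤ x) (h : P k x = 0) :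
    φ - 1 / k < x := by
  have hx1 := one_lt_of_P_eq_zero hx h
  have h_gap : 0 < φ - x := sub_pos.mpr (lt_goldenRatio_of_P_eq_zero hk hx h)
  have h_eq := pow_mul_sq_sub_sub_one_eq_of_P_eq_zero hk h
  rw [sq_sub_sub_one_eq_mul] at h_eq
  have h_pow : x ^ k = x ^ (k - 1) * x := by rw [← pow_succ, Nat.sub_add_cancel (by omega)]
  have h_k : (k : ℝ) * (φ - x) < 1 := calc
    (k : ℝ) * (φ - x) ≤ x ^ k * (φ - x) := by
      gcongr; exact natCast_le_pow_of_P_eq_zero hx1.le h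
    _ ≤ x ^ (k - 1) * ((φ - x) * (x + φ - 1)) := by
      rw [h_pow, mul_assoc, mul_comm x]
      gcongr
      linarith [one_lt_goldenRatio]
    _ = 2 - x := by linear_combination -h_eq
    _ < 1 := by linarith
  have hk_pos : (0 : ℝ) < k := by positivity
  rw [sub_lt_comm, lt_div_iff₀ hk_pos]
  linarith

theorem roots_tendsto_goldenRatio (α : ℕ → ℝ)
    (hα : ∀ k, 2 ≤ k → 0 < α k ∧ P k (α k) = 0) :
    Filter.Tendsto α Filter.atTop (nhds ((1 + Real.sqrt 5) / 2)) := by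
  have h_lower : ∀ᶠ k in atTop, φ - 1 / k ≤ α k := by
    filter_upwards [eventually_ge_atTop 2] with k hk
    exact (goldenRatio_sub_inv_lt_of_P_eq_zero hk (hα k hk).1.le (hα k hk).2).le
  have h_upper : ∀ᶠ k in atTop, α k ≤ φ := by
    filter_upwards [eventually_ge_atTop 2] with k hk
    exact (lt_goldenRatio_of_P_eq_zero hk (hα k hk).1.le (hα k hk).2).le
  refine tendsto_of_tendsto_of_tendsto_of_le_of_le' ?_ tendsto_const_nhds h_lower h_upper
  simpa using tendsto_const_nhds.sub (tendsto_one_div_atTop_nhds_zero_nat (𝕜 := ℝ))
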